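/- Set p₁ = 2+√3, p₂ = 2−√3, p₃ = √2+1, p₄ = √2−1, p₅ = 1. Then for every complex t with (1+t²)(1+6t²+t⁴)(1+14t²+t⁴) ≠ 0: a₁(t) = (1/24)·(p₁t/(1+(p₁t)²) + p₂t/(1+(p₂t)²)) + (√2/8)·(p₃t/(1+(p₃t)²) + p₄t/(1+(p₄t)²)) + (1/3)·t/(1+t²); a₅(t) = (1/24)·(p₁t/(1+(p₁t)²) + p₂t/(1+(p₂t)²)) − (√2/8)·(p₃t/(1+(p₃t)²) + p₄t/(1+(p₄t)²)) + (1/3)·t/(1+t²); a₃(t) = (1/24)·(p₁t/(1+(p₁t)²) + p₂t/(1+(p₂t)²)) − (1/6)·t/(1+t²). (Note p₁p₂ = p₃p₄ = 1.) -/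

import Mathlib

open scoped BigOperators

/-- Coefficient `a₁(t)` for complex `t`. -/
noncomputable def a1C (t : ℂ) : ℂ :=
  t * (1 + 16 * t ^ 2 + 46 * t ^ 4 + 16 * t ^ 6 + t ^ 8) /
    ((1 + t ^ 2) * (1 + 6 * t ^ 2 + t ^ 4) * (1 + 14 * t ^ 2 + t ^ 4))

/-- Coefficient `a₃(t)` for complex `t`. -/
noncomputable def a3C (t : ℂ) : ℂ :=
  -2 * t ^ 3 / ((1 + t ^ 2) * (1 + 14 * t ^ 2 + t ^ 4))

/-- Coefficient `a₅(t)` for complex `t`. -/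
noncomputable def a5C (t : ℂ) : ℂ :=
  16 * t ^ 5 / ((1 + t ^ 2) * (1 + 6 * t ^ 2 + t ^ 4) * (1 + 14 * t ^ 2 + t ^ 4))

/-!
Over `u = t²` the three coefficients have the denominator `(1 + u)(1 + 6u + u²)(1 + 14u + u²)`,
so they are combinations of `t (1 + u) / (1 + 14u + u²)`, `t (1 + u) / (1 + 6u + u²)` and
`t / (1 + u)`. Each quartic factor splits as `(1 + p²t²)(1 + q²t²)` with `pq = 1`, and then
`pt / (1 + p²t²) + qt / (1 + q²t²) = (p + q) t (1 + t²) / ((1 + p²t²)(1 + q²t²))`.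
For `p, q = 2 ± √3` we get `p + q = 4`, `p² + q² = 14`; for `p, q = √2 ± 1`, `p + q = 2√2`,
`p² + q² = 6`.
-/

section Field

variable {K : Type*} [Field K] {p q t c : K}

theorem one_add_sq_mul_one_add_sq_of_mul_eq_one (hpq : p * q = 1) (hc : p ^ 2 + q ^ 2 = c) :
    (1 + (p * t) ^ 2) * (1 + (q * t) ^ 2) = 1 + c * t ^ 2 + t ^ 4 := by
  linear_combination t ^ 2 * hc + (p * q + 1) * t ^ 4 * hpq

theorem div_one_add_sq_add_div_one_add_sq_of_mul_eq_one (hpq : p * q = 1)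
    (hc : p ^ 2 + q ^ 2 = c) (h : 1 + c * t ^ 2 + t ^ 4 ≠ 0) :
    p * t / (1 + (p * t) ^ 2) + q * t / (1 + (q * t) ^ 2) =
      (p + q) * t * (1 + t ^ 2) / (1 + c * t ^ 2 + t ^ 4) := by
  have hprod := one_add_sq_mul_one_add_sq_of_mul_eq_one (t := t) hpq hc
  rw [← hprod] at h ⊢
  rw [div_add_div _ _ (left_ne_zero_of_mul h) (right_ne_zero_of_mul h)]
  congr 1
  linear_combination (p + q) * t ^ 3 * hpq

end Field

theorem two_add_sqrt_three_mul_two_sub_sqrt_three : (2 + √3) * (2 - √3) = 1 := by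
  linear_combination -Real.sq_sqrt (show (0 : ℝ) ≤ 3 by norm_num)

theorem two_add_sqrt_three_sq_add_two_sub_sqrt_three_sq : (2 + √3) ^ 2 + (2 - √3) ^ 2 = 14 := by
  linear_combination 2 * Real.sq_sqrt (show (0 : ℝ) ≤ 3 by norm_num)

theorem sqrt_two_add_one_mul_sqrt_two_sub_one : (√2 + 1) * (√2 - 1) = 1 := by
  linear_combination Real.sq_sqrt (show (0 : ℝ) ≤ 2 by norm_num)

theorem sqrt_two_add_one_sq_add_sqrt_two_sub_one_sq : (√2 + 1) ^ 2 + (√2 - 1) ^ 2 = 6 := by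
  linear_combination 2 * Real.sq_sqrt (show (0 : ℝ) ≤ 2 by norm_num)

section Coefficients

variable {t : ℂ} (hs : 1 + t ^ 2 ≠ 0) (hv : 1 + 14 * t ^ 2 + t ^ 4 ≠ 0)
include hs hv

theorem a1C_eq (hu : 1 + 6 * t ^ 2 + t ^ 4 ≠ 0) :
    a1C t = 1 / 6 * (t * (1 + t ^ 2) / (1 + 14 * t ^ 2 + t ^ 4)) +
      1 / 2 * (t * (1 + t ^ 2) / (1 + 6 * t ^ 2 + t ^ 4)) + 1 / 3 * (t / (1 + t ^ 2)) := by
  simp only [a1C, ← mul_div_assoc]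
  rw [div_add_div _ _ hv hu, div_add_div _ _ (mul_ne_zero hv hu) hs,
    div_eq_div_iff (by simp [*]) (by simp [*])]
  ring

theorem a5C_eq (hu : 1 + 6 * t ^ 2 + t ^ 4 ≠ 0) :
    a5C t = 1 / 6 * (t * (1 + t ^ 2) / (1 + 14 * t ^ 2 + t ^ 4)) -
      1 / 2 * (t * (1 + t ^ 2) / (1 + 6 * t ^ 2 + t ^ 4)) + 1 / 3 * (t / (1 + t ^ 2)) := by
  simp only [a5C, ← mul_div_assoc]
  rw [div_sub_div _ _ hv hu, div_add_div _ _ (mul_ne_zero hv hu) hs,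
    div_eq_div_iff (by simp [*]) (by simp [*])]
  ring

theorem a3C_eq :
    a3C t = 1 / 6 * (t * (1 + t ^ 2) / (1 + 14 * t ^ 2 + t ^ 4)) - 1 / 6 * (t / (1 + t ^ 2)) := by
  simp only [a3C, ← mul_div_assoc]
  rw [div_sub_div _ _ hv hs, div_eq_div_iff (by simp [*]) (by simp [*])]
  ring

end Coefficients

/-- partial-fraction expansions of `a₁`, `a₃`, `a₅`, with
`p₁ = 2+√3`, `p₂ = 2−√3`, `p₃ = √2+1`, `p₄ = √2−1`, `p₅ = 1`
(note `p₁p₂ = p₃p₄ = 1`). -/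
theorem partial_fraction_expansions (t : ℂ)
    (hD : (1 + t ^ 2) * (1 + 6 * t ^ 2 + t ^ 4) * (1 + 14 * t ^ 2 + t ^ 4) ≠ 0) :
    (((2 + Real.sqrt 3 : ℝ) : ℂ) * ((2 - Real.sqrt 3 : ℝ) : ℂ) = 1 ∧
      ((Real.sqrt 2 + 1 : ℝ) : ℂ) * ((Real.sqrt 2 - 1 : ℝ) : ℂ) = 1) ∧
    a1C t =
      (1 / 24) * (((2 + Real.sqrt 3 : ℝ) : ℂ) * t / (1 + (((2 + Real.sqrt 3 : ℝ) : ℂ) * t) ^ 2) +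
          ((2 - Real.sqrt 3 : ℝ) : ℂ) * t / (1 + (((2 - Real.sqrt 3 : ℝ) : ℂ) * t) ^ 2)) +
        ((Real.sqrt 2 : ℝ) : ℂ) / 8 *
          (((Real.sqrt 2 + 1 : ℝ) : ℂ) * t / (1 + (((Real.sqrt 2 + 1 : ℝ) : ℂ) * t) ^ 2) +
            ((Real.sqrt 2 - 1 : ℝ) : ℂ) * t / (1 + (((Real.sqrt 2 - 1 : ℝ) : ℂ) * t) ^ 2)) +
        (1 / 3) * (t / (1 + t ^ 2)) ∧
    a5C t =
      (1 / 24) * (((2 + Real.sqrt 3 : ℝ) : ℂ) * t / (1 + (((2 + Real.sqrt 3 : ℝ) : ℂ) * t) ^ 2) +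
          ((2 - Real.sqrt 3 : ℝ) : ℂ) * t / (1 + (((2 - Real.sqrt 3 : ℝ) : ℂ) * t) ^ 2)) -
        ((Real.sqrt 2 : ℝ) : ℂ) / 8 *
          (((Real.sqrt 2 + 1 : ℝ) : ℂ) * t / (1 + (((Real.sqrt 2 + 1 : ℝ) : ℂ) * t) ^ 2) +
            ((Real.sqrt 2 - 1 : ℝ) : ℂ) * t / (1 + (((Real.sqrt 2 - 1 : ℝ) : ℂ) * t) ^ 2)) +
        (1 / 3) * (t / (1 + t ^ 2)) ∧
    a3C t =
      (1 / 24) * (((2 + Real.sqrt 3 : ℝ) : ℂ) * t / (1 + (((2 + Real.sqrt 3 : ℝ) : ℂ) * t) ^ 2) +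
          ((2 - Real.sqrt 3 : ℝ) : ℂ) * t / (1 + (((2 - Real.sqrt 3 : ℝ) : ℂ) * t) ^ 2)) -
        (1 / 6) * (t / (1 + t ^ 2)) := by
  obtain ⟨hsu, hv⟩ := mul_ne_zero_iff.mp hD
  obtain ⟨hs, hu⟩ := mul_ne_zero_iff.mp hsu
  have hprod₁ : ((2 + √3 : ℝ) : ℂ) * ((2 - √3 : ℝ) : ℂ) = 1 := by
    exact_mod_cast two_add_sqrt_three_mul_two_sub_sqrt_three
  have hprod₂ : ((√2 + 1 : ℝ) : ℂ) * ((√2 - 1 : ℝ) : ℂ) = 1 := by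
    exact_mod_cast sqrt_two_add_one_mul_sqrt_two_sub_one
  have hpair₁ : (1 / 24) * (((2 + √3 : ℝ) : ℂ) * t / (1 + (((2 + √3 : ℝ) : ℂ) * t) ^ 2) +
      ((2 - √3 : ℝ) : ℂ) * t / (1 + (((2 - √3 : ℝ) : ℂ) * t) ^ 2)) =
        1 / 6 * (t * (1 + t ^ 2) / (1 + 14 * t ^ 2 + t ^ 4)) := by
    rw [div_one_add_sq_add_div_one_add_sq_of_mul_eq_one hprod₁
      (by exact_mod_cast two_add_sqrt_three_sq_add_two_sub_sqrt_three_sq) hv]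
    push_cast
    ring
  have hpair₂ : ((√2 : ℝ) : ℂ) / 8 * (((√2 + 1 : ℝ) : ℂ) * t / (1 + (((√2 + 1 : ℝ) : ℂ) * t) ^ 2) +
      ((√2 - 1 : ℝ) : ℂ) * t / (1 + (((√2 - 1 : ℝ) : ℂ) * t) ^ 2)) =
        1 / 2 * (t * (1 + t ^ 2) / (1 + 6 * t ^ 2 + t ^ 4)) := by
    rw [div_one_add_sq_add_div_one_add_sq_of_mul_eq_one hprod₂
      (by exact_mod_cast sqrt_two_add_one_sq_add_sqrt_two_sub_one_sq) hu]
    have hsqrt : ((√2 : ℝ) : ℂ) ^ 2 = 2 := by exact_mod_cast Real.sq_sqrt zero_le_two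
    push_cast
    linear_combination 1 / 4 * (t * (1 + t ^ 2) / (1 + 6 * t ^ 2 + t ^ 4)) * hsqrt
  rw [hpair₁, hpair₂]
  exact ⟨⟨hprod₁, hprod₂⟩, a1C_eq hs hv hu, a5C_eq hs hv hu, a3C_eq hs hv⟩
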